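/- Let J be a real m×n matrix such that JᵀJ is invertible, let g ∈ ℝⁿ be a nonzero vector, and let η > 0. Define δ* = η · (JᵀJ)⁻¹g / ‖J (JᵀJ)⁻¹ g‖₂. Then δ* is the unique maximizer: if δ ∈ ℝⁿ satisfies ‖Jδ‖₂ ≤ η and gᵀδ = gᵀδ*, then δ = δ*. -/

import Mathlib

open Matrix

/-- The Euclidean (`L2`) norm of a vector in `ℝ^k`. -/
noncomputable def euclNorm {k : ℕ} (v : Fin k → ℝ) : ℝ := Real.sqrt (∑ i, v i ^ 2)

/-!
Write `w = (JᵀJ)⁻¹ g` and `u = J w`. Then `gᵀδ = ⟪u, Jδ⟫` for every `δ`, so in the variable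
`x = Jδ` the problem is to maximise `⟪u, x⟫` over the ball `‖x‖ ≤ η`. By the equality case of
Cauchy–Schwarz the only maximiser is `x = (η / ‖u‖) u = Jδ*`, and `δ = δ*` because `J` is injective
(`JᵀJ` is).
-/

open scoped RealInnerProductSpace

theorem eq_smul_of_norm_le_of_inner_eq {E : Type*} [NormedAddCommGroup E] [InnerProductSpace ℝ E]
    {u x : E} {r : ℝ} (hu : u ≠ 0) (hx : ‖x‖ ≤ r) (hux : ⟪u, x⟫ = ⟪u, (r / ‖u‖) • u⟫) :
    x = (r / ‖u‖) • u := by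
  have hu_pos : 0 < ‖u‖ := norm_pos_iff.mpr hu
  have hval : ⟪u, x⟫ = ‖u‖ * r := by
    rw [hux, real_inner_smul_right, real_inner_self_eq_norm_sq]
    field_simp
  have hnorm : ‖x‖ = r :=
    le_antisymm hx (le_of_mul_le_mul_left (hval ▸ real_inner_le_norm u x) hu_pos)
  have hcs : ‖x‖ • u = ‖u‖ • x := inner_eq_norm_mul_iff_real.mp (by rw [hval, hnorm])
  rw [hnorm] at hcs
  rw [div_eq_inv_mul, mul_smul, hcs, inv_smul_smul₀ hu_pos.ne']

theorem euclNorm_eq_norm_toLp {k : ℕ} (v : Fin k → ℝ) :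
    euclNorm v = ‖WithLp.toLp 2 v‖ := by
  simp [euclNorm, EuclideanSpace.norm_eq]

theorem dotProduct_eq_inner_toLp {k : ℕ} (u v : Fin k → ℝ) :
    u ⬝ᵥ v = ⟪WithLp.toLp 2 u, WithLp.toLp 2 v⟫ := by
  simp [EuclideanSpace.inner_eq_star_dotProduct, dotProduct_comm]

section Matrix

variable {R : Type*} {m n : Type*} [Fintype m] [Fintype n]

theorem mulVec_dotProduct_mulVec [CommSemiring R] (J : Matrix m n R) (a b : n → R) :
    J *ᵥ a ⬝ᵥ J *ᵥ b = (Jᵀ * J) *ᵥ a ⬝ᵥ b := by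
  rw [dotProduct_mulVec, ← mulVec_transpose, mulVec_mulVec]

theorem mulVec_injective_of_isUnit_transpose_mul [Field R] [DecidableEq n] {J : Matrix m n R}
    (hJ : IsUnit (Jᵀ * J)) : Function.Injective J.mulVec := fun a b hab =>
  mulVec_injective_iff_isUnit.mpr hJ <| by rw [← mulVec_mulVec, hab, mulVec_mulVec]

theorem dotProduct_eq_mulVec_dotProduct_mulVec [Field R] [DecidableEq n] {J : Matrix m n R}
    (hJ : IsUnit (Jᵀ * J)) (g d : n → R) :
    g ⬝ᵥ d = J *ᵥ ((Jᵀ * J)⁻¹ *ᵥ g) ⬝ᵥ J *ᵥ d := by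
  rw [mulVec_dotProduct_mulVec, mulVec_mulVec,
    mul_nonsing_inv _ ((isUnit_iff_isUnit_det _).mp hJ), one_mulVec]

end Matrix

theorem ppgd_step_unique_general {m n : ℕ} (J : Matrix (Fin m) (Fin n) ℝ)
    (hJ : IsUnit (Jᵀ * J)) (g : Fin n → ℝ) (hg : g ≠ 0) (η : ℝ)
    (δstar : Fin n → ℝ)
    (hδstar : δstar =
      (η / euclNorm (J.mulVec ((Jᵀ * J)⁻¹.mulVec g))) • ((Jᵀ * J)⁻¹.mulVec g)) :
    ∀ δ : Fin n → ℝ, euclNorm (J.mulVec δ) ≤ η → g ⬝ᵥ δ = g ⬝ᵥ δstar → δ = δstar := by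
  intro δ hfeas hobj
  set u := J *ᵥ ((Jᵀ * J)⁻¹ *ᵥ g)
  have hgu : ∀ d, g ⬝ᵥ d = u ⬝ᵥ J *ᵥ d := dotProduct_eq_mulVec_dotProduct_mulVec hJ g
  have hu : u ≠ 0 := fun hu0 => hg <| dotProduct_self_eq_zero.mp <| by
    rw [hgu, hu0, zero_dotProduct]
  have hJδstar : J *ᵥ δstar = (η / euclNorm u) • u := by rw [hδstar, mulVec_smul]
  apply mulVec_injective_of_isUnit_transpose_mul hJ
  rw [hJδstar]
  apply WithLp.toLp_injective 2
  rw [WithLp.toLp_smul, euclNorm_eq_norm_toLp]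
  refine eq_smul_of_norm_le_of_inner_eq (by simpa using hu) (by rwa [← euclNorm_eq_norm_toLp]) ?_
  rw [← WithLp.toLp_smul, ← euclNorm_eq_norm_toLp, ← dotProduct_eq_inner_toLp,
    ← dotProduct_eq_inner_toLp, ← hJδstar, ← hgu, ← hgu, hobj]

/-- Lemma 1 (uniqueness): `δ* = η (JᵀJ)⁻¹ g / ‖J (JᵀJ)⁻¹ g‖₂` is the *unique*
maximizer of `gᵀδ` over `{δ : ‖Jδ‖₂ ≤ η}`: any feasible `δ` attaining the same
objective value equals `δ*`. -/
theorem ppgd_step_unique {m n : ℕ} (J : Matrix (Fin m) (Fin n) ℝ)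
    (hJ : IsUnit (Jᵀ * J)) (g : Fin n → ℝ) (hg : g ≠ 0) (η : ℝ) (hη : 0 < η)
    (δstar : Fin n → ℝ)
    (hδstar : δstar =
      (η / euclNorm (J.mulVec ((Jᵀ * J)⁻¹.mulVec g))) • ((Jᵀ * J)⁻¹.mulVec g)) :
    ∀ δ : Fin n → ℝ, euclNorm (J.mulVec δ) ≤ η → g ⬝ᵥ δ = g ⬝ᵥ δstar → δ = δstar :=
  ppgd_step_unique_general J hJ g hg η δstar hδstar
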